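/- For every n ≥ 1, the map σ̂_n is an involution: σ̂_n(σ̂_n(k)) = k for all k ∈ I_n. -/

import Mathlib

/-- The Sierpinski gasket pattern: `g n m` is `g_m^{(n)} ∈ {0,1}` for `1 ≤ m ≤ n`,
defined by `g_1^{(n)} = g_n^{(n)} = 1` and
`g_m^{(n)} = g_{m-1}^{(n-1)} + g_m^{(n-1)} mod 2` for `2 ≤ m ≤ n−1`. -/
def g : ℕ → ℕ → ℕ
  | 0, _ => 0
  | n + 1, m =>
    if m = 1 ∨ m = n + 1 then 1
    else if 2 ≤ m ∧ m ≤ n then (g n (m - 1) + g n m) % 2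
    else 0

/-- The doubling operators `T_0` and `T_1` on binary tuples. -/
def Tmap (α : ℕ) (s : List ℕ) : List ℕ :=
  if α = 0 then s ++ s else s ++ s.map (fun x => 1 - x)

/-- The binary tuple `ν⁽ⁿ⁾ = (T_{g_1^{(n)}} ∘ T_{g_2^{(n)}} ∘ ⋯ ∘ T_{g_{n-1}^{(n)}})(0)`,
of length `2^{n-1}`. -/
def nuList (n : ℕ) : List ℕ :=
  (List.range (n - 1)).foldr (fun i acc => Tmap (g n (i + 1)) acc) [0]

/-- The entry `ν_m^{(n)}`. -/
def nu (n m : ℕ) : ℕ := (nuList n).getD m 0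

/-- The map `σ̂_n` on `I_n = {0, …, 2ⁿ−1}`: `σ̂_1 = id` and
`σ̂_n(j) = σ̂_{n-1}(j mod 2^{n-1}) + 2^{n-1}·c_j` where `c_{2m} = 1 − ν_m^{(n)}` and
`c_{2m+1} = ν_m^{(n)}`. -/
def sigmaHat : ℕ → ℕ → ℕ
  | 0, j => j
  | 1, j => j
  | n + 2, j =>
    sigmaHat (n + 1) (j % 2 ^ (n + 1)) +
      2 ^ (n + 1) * (if j % 2 = 0 then 1 - nu (n + 2) (j / 2) else nu (n + 2) (j / 2))

/-!
Write `bits j : ℕ → ZMod 2` for the binary digits of `j`. Since `g_m^{(n)} = C(n-1, m-1) mod 2`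
and bit `i` of `m` selects the operator `T_{g_{n-1-i}^{(n)}}`, one gets
`ν_m^{(n)} = Σ_i C(n-1, i+1) m_i mod 2`, so bit `k` of `σ̂_n(j)` is `j_0` for `k = 0` and
`1 + Σ_{l ≤ k} C(k, l) j_l` for `k ≥ 1`. On digits `σ̂_n` is therefore the affine map
`x ↦ P x + e`, where `P` is the Pascal matrix mod 2 and `e = (0, 1, 1, …)`.
As `Σ_t C(k,t) C(t,l) = C(k,l) 2^{k-l}`, `P² = 1` mod 2, and `P e = e` because
`Σ_{l ≥ 1} C(k,l) = 2^k - 1`; hence `P (P x + e) + e = x`.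
-/

open Finset

theorem Nat.sum_range_choose_mul_choose (n l : ℕ) (hl : l ≤ n) :
    ∑ t ∈ range (n + 1), n.choose t * t.choose l = n.choose l * 2 ^ (n - l) := by
  rw [range_eq_Ico, ← sum_Ico_consecutive _ l.zero_le (by omega : l ≤ n + 1),
    sum_eq_zero fun t ht => by rw [Nat.choose_eq_zero_of_lt (mem_Ico.mp ht).2, mul_zero],
    zero_add, sum_Ico_eq_sum_range, show n + 1 - l = n - l + 1 by omega,
    ← Nat.sum_range_choose (n - l), mul_sum]
  refine sum_congr rfl fun t _ => ?_
  rw [Nat.choose_mul (by omega), Nat.add_sub_cancel_left]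

section Pascal

variable {R : Type*} [Semiring R]

def pascal (x : ℕ → R) (k : ℕ) : R := ∑ l ∈ range (k + 1), (k.choose l : R) * x l

def posIndicator (k : ℕ) : R := if k = 0 then 0 else 1

def pascalAffine (x : ℕ → R) (k : ℕ) : R := pascal x k + posIndicator k

theorem pascal_add (x y : ℕ → R) : pascal (x + y) = pascal x + pascal y := by
  ext k
  simp only [pascal, Pi.add_apply, mul_add, sum_add_distrib]

theorem pascal_congr {x y : ℕ → R} {k : ℕ} (h : ∀ l ≤ k, x l = y l) :
    pascal x k = pascal y k :=
  sum_congr rfl fun l hl => by rw [h l (Nat.lt_succ_iff.mp (mem_range.mp hl))]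

theorem pascalAffine_congr {x y : ℕ → R} {k : ℕ} (h : ∀ l ≤ k, x l = y l) :
    pascalAffine x k = pascalAffine y k := by
  rw [pascalAffine, pascalAffine, pascal_congr h]

theorem pascal_eq_sum_range_of_le (x : ℕ → R) {t m : ℕ} (h : t ≤ m) :
    pascal x t = ∑ l ∈ range (m + 1), (t.choose l : R) * x l :=
  sum_subset (range_subset_range.mpr (by omega)) fun l _ hl => by
    rw [Nat.choose_eq_zero_of_lt (by simpa using hl), Nat.cast_zero, zero_mul]

variable [CharP R 2]

open CharTwo in
theorem sum_range_choose_mul_choose_charTwo (k l : ℕ) :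
    ∑ t ∈ range (k + 1), (k.choose t : R) * (t.choose l : R) = if l = k then 1 else 0 := by
  rcases lt_trichotomy l k with hlk | rfl | hkl
  · have h := congrArg (Nat.cast : ℕ → R) (Nat.sum_range_choose_mul_choose k l hlk.le)
    push_cast at h
    rw [h, two_eq_zero, zero_pow (by omega), mul_zero, if_neg hlk.ne]
  · rw [sum_range_succ, sum_eq_zero fun t ht => by
      rw [Nat.choose_eq_zero_of_lt (mem_range.mp ht), Nat.cast_zero, mul_zero]]
    simp
  · rw [if_neg hkl.ne', sum_eq_zero fun t ht => by
      rw [Nat.choose_eq_zero_of_lt (by simp at ht; omega : t < l), Nat.cast_zero, mul_zero]]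

theorem pascal_pascal (x : ℕ → R) : pascal (pascal x) = x := by
  ext k
  calc pascal (pascal x) k
      = ∑ t ∈ range (k + 1), ∑ l ∈ range (k + 1), (k.choose t : R) * ((t.choose l : R) * x l) :=
        sum_congr rfl fun t ht => by
          rw [pascal_eq_sum_range_of_le x (Nat.lt_succ_iff.mp (mem_range.mp ht)), mul_sum]
    _ = ∑ l ∈ range (k + 1), (if l = k then 1 else 0) * x l := by
        rw [sum_comm]
        refine sum_congr rfl fun l _ => ?_
        simp only [← mul_assoc, ← sum_mul, sum_range_choose_mul_choose_charTwo]
    _ = x k := by simp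

open CharTwo in
theorem pascal_posIndicator : pascal (posIndicator : ℕ → R) = posIndicator := by
  ext k
  rcases k with _ | k
  · simp [pascal, posIndicator]
  have hsum := congrArg (Nat.cast : ℕ → R) (Nat.sum_range_choose (k + 1))
  rw [sum_range_succ', Nat.choose_zero_right] at hsum
  push_cast at hsum
  rw [two_eq_zero, zero_pow k.succ_ne_zero] at hsum
  rw [pascal, sum_range_succ']
  simp only [posIndicator, Nat.add_one_ne_zero, if_false, if_true, mul_one, mul_zero, add_zero]
  rw [← CharTwo.add_cancel_right (∑ l ∈ range (k + 1), ((k + 1).choose (l + 1) : R)) 1, hsum,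
    zero_add]

theorem pascalAffine_involutive : Function.Involutive (pascalAffine : (ℕ → R) → ℕ → R) := by
  intro x
  change pascal (pascal x + posIndicator) + posIndicator = x
  rw [pascal_add, pascal_pascal, pascal_posIndicator, add_assoc, CharTwo.add_self_eq_zero, add_zero]

end Pascal

def bits (j : ℕ) (i : ℕ) : ZMod 2 := (j.testBit i).toNat

theorem bits_eq_cast_div (j i : ℕ) : bits j i = ((j / 2 ^ i : ℕ) : ZMod 2) := by
  rw [bits, Nat.toNat_testBit, ZMod.natCast_mod]

theorem bits_zero (j : ℕ) : bits j 0 = j := by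
  rw [bits_eq_cast_div, pow_zero, Nat.div_one]

theorem bits_div_two (j i : ℕ) : bits (j / 2) i = bits j (i + 1) := by
  rw [bits, Nat.testBit_div_two, bits]

theorem bits_mod_two_pow {j N i : ℕ} (h : i < N) : bits (j % 2 ^ N) i = bits j i := by
  simp [bits, h]

theorem bits_two_pow_mul_add {a N : ℕ} (c : ℕ) (ha : a < 2 ^ N) (i : ℕ) :
    bits (2 ^ N * c + a) i = if i < N then bits a i else bits c (i - N) := by
  rw [bits, Nat.testBit_two_pow_mul_add c ha]
  split_ifs <;> rfl

theorem eq_of_bits_eq {n j j' : ℕ} (hj : j < 2 ^ n) (hj' : j' < 2 ^ n)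
    (h : ∀ i < n, bits j i = bits j' i) : j = j' := by
  refine Nat.eq_of_testBit_eq fun i => ?_
  rcases lt_or_ge i n with hi | hi
  · have := h i hi
    revert this
    simp only [bits]
    cases j.testBit i <;> cases j'.testBit i <;> decide
  · have h2 : 2 ^ n ≤ 2 ^ i := Nat.pow_le_pow_right two_pos hi
    rw [Nat.testBit_lt_two_pow (by omega), Nat.testBit_lt_two_pow (by omega)]

def tmapFold (f : ℕ → ℕ) (N : ℕ) : List ℕ :=
  (List.range N).foldr (fun i acc => Tmap (f i) acc) [0]

theorem tmapFold_succ (f : ℕ → ℕ) (N : ℕ) :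
    tmapFold f (N + 1) = Tmap (f 0) (tmapFold (fun i => f (i + 1)) N) := by
  rw [tmapFold, List.range_succ_eq_map, List.foldr_cons, List.foldr_map, tmapFold]

theorem length_Tmap (a : ℕ) (s : List ℕ) : (Tmap a s).length = 2 * s.length := by
  unfold Tmap
  split_ifs <;> simp [two_mul]

theorem le_one_of_mem_Tmap {a : ℕ} {s : List ℕ} (hs : ∀ x ∈ s, x ≤ 1) :
    ∀ x ∈ Tmap a s, x ≤ 1 := by
  unfold Tmap
  split_ifs <;> simp only [List.mem_append, List.mem_map]
  · rintro x (hx | hx) <;> exact hs x hx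
  · rintro x (hx | ⟨y, -, rfl⟩)
    exacts [hs x hx, by omega]

theorem length_tmapFold (f : ℕ → ℕ) (N : ℕ) : (tmapFold f N).length = 2 ^ N := by
  induction N generalizing f with
  | zero => rfl
  | succ N ih => rw [tmapFold_succ, length_Tmap, ih, pow_succ']

theorem le_one_of_mem_tmapFold (f : ℕ → ℕ) (N : ℕ) : ∀ x ∈ tmapFold f N, x ≤ 1 := by
  induction N generalizing f with
  | zero => simp [tmapFold]
  | succ N ih => rw [tmapFold_succ]; exact le_one_of_mem_Tmap (ih _)

theorem cast_one_sub_of_le_one {v : ℕ} (hv : v ≤ 1) : ((1 - v : ℕ) : ZMod 2) = 1 + v := by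
  interval_cases v <;> decide

theorem cast_getD_Tmap {a : ℕ} {s : List ℕ} (ha : a ≤ 1) (hs : ∀ x ∈ s, x ≤ 1) {m : ℕ}
    (hm : m < 2 * s.length) :
    ((Tmap a s).getD m 0 : ZMod 2) = s.getD (m % s.length) 0 + (m / s.length : ℕ) * a := by
  rcases lt_or_ge m s.length with hlt | hge
  · rw [Nat.mod_eq_of_lt hlt, Nat.div_eq_of_lt hlt, Tmap]
    split_ifs <;> simp only [List.getD_append _ _ _ _ hlt, Nat.cast_zero, zero_mul, add_zero]
  have hmod : m % s.length = m - s.length := by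
    rw [Nat.mod_eq_sub_mod hge, Nat.mod_eq_of_lt (by omega)]
  have hdiv : m / s.length = 1 := Nat.div_eq_of_lt_le (by omega) (by omega)
  rw [hmod, hdiv, Tmap]
  split_ifs with ha0
  · simp only [List.getD_append_right _ _ _ _ hge, ha0, Nat.cast_zero, mul_zero, add_zero]
  · have hr : m - s.length < s.length := by omega
    obtain rfl : a = 1 := by omega
    rw [List.getD_append_right _ _ _ _ hge, List.getD_eq_getElem _ _ (by simpa),
      List.getElem_map, List.getD_eq_getElem _ _ hr, Nat.cast_one, one_mul, add_comm,
      cast_one_sub_of_le_one (hs _ (List.getElem_mem _))]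

theorem cast_getD_tmapFold {f : ℕ → ℕ} (hf : ∀ i, f i ≤ 1) {N m : ℕ} (hm : m < 2 ^ N) :
    ((tmapFold f N).getD m 0 : ZMod 2) = ∑ i ∈ range N, (f (N - 1 - i) : ZMod 2) * bits m i := by
  induction N generalizing f m with
  | zero => simp_all [tmapFold]
  | succ N ih =>
    have hlen := length_tmapFold (fun i => f (i + 1)) N
    rw [tmapFold_succ, cast_getD_Tmap (hf 0) (le_one_of_mem_tmapFold _ _) (by omega), hlen,
      ih (fun i => hf (i + 1)) (Nat.mod_lt _ (by positivity)), ← bits_eq_cast_div,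
      sum_range_succ, Nat.add_sub_cancel, Nat.sub_self, mul_comm (bits m N)]
    congr 1
    refine sum_congr rfl fun i hi => ?_
    have hi := mem_range.mp hi
    rw [bits_mod_two_pow hi, show N - 1 - i + 1 = N - i by omega]

theorem g_le_one (n m : ℕ) : g n m ≤ 1 := by
  cases n with
  | zero => simp [g]
  | succ n =>
    unfold g
    split_ifs <;> omega

theorem g_succ_succ (n i : ℕ) (hi : i ≤ n) : g (n + 1) (i + 1) = n.choose i % 2 := by
  induction n generalizing i with
  | zero => simp [g, Nat.le_zero.mp hi]
  | succ n ih =>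
    rw [g]
    split_ifs with hedge hmid
    · rcases hedge with h | h <;> obtain rfl : i = _ := Nat.add_right_cancel h <;> simp
    · obtain ⟨i, rfl⟩ : ∃ i', i = i' + 1 := ⟨i - 1, by omega⟩
      rw [Nat.add_sub_cancel, ih i (by omega), ih (i + 1) (by omega), Nat.choose_succ_succ,
        ← Nat.add_mod]
    · omega

theorem nu_succ_eq_getD_tmapFold (n m : ℕ) :
    nu (n + 1) m = (tmapFold (fun i => g (n + 1) (i + 1)) n).getD m 0 := rfl

theorem nu_le_one (n m : ℕ) : nu n m ≤ 1 := by
  rw [nu, List.getD_eq_getElem?_getD]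
  cases h : (nuList n)[m]? with
  | none => simp
  | some x => exact le_one_of_mem_tmapFold _ (n - 1) x (List.mem_of_getElem? h)

theorem cast_nu_succ {n m : ℕ} (hm : m < 2 ^ n) :
    (nu (n + 1) m : ZMod 2) = ∑ i ∈ range n, (n.choose (i + 1) : ZMod 2) * bits m i := by
  rw [nu_succ_eq_getD_tmapFold, cast_getD_tmapFold (fun i => g_le_one _ _) hm]
  refine sum_congr rfl fun i hi => ?_
  have hi := mem_range.mp hi
  rw [g_succ_succ n _ (by omega), ZMod.natCast_mod, ← Nat.choose_symm (by omega : i + 1 ≤ n),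
    show n - (i + 1) = n - 1 - i by omega]

theorem cast_ite_one_sub {j v : ℕ} (hv : v ≤ 1) :
    ((if j % 2 = 0 then 1 - v else v : ℕ) : ZMod 2) = 1 + j + v := by
  rw [← ZMod.natCast_mod j 2]
  rcases Nat.mod_two_eq_zero_or_one j with h | h <;> rw [h] <;> interval_cases v <;> decide

theorem cast_sigmaHat_topBit (n : ℕ) {j : ℕ} (hj : j < 2 ^ (n + 2)) :
    ((if j % 2 = 0 then 1 - nu (n + 2) (j / 2) else nu (n + 2) (j / 2) : ℕ) : ZMod 2) =
      pascalAffine (bits j) (n + 1) := by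
  rw [cast_ite_one_sub (nu_le_one _ _), cast_nu_succ (by rw [pow_succ] at hj; omega),
    pascalAffine, pascal, sum_range_succ' _ (n + 1), posIndicator, if_neg n.succ_ne_zero,
    Nat.choose_zero_right, Nat.cast_one, one_mul, bits_zero]
  simp only [bits_div_two]
  ring

theorem sigmaHat_succ_lt {n j : ℕ} (hj : j < 2 ^ (n + 1)) : sigmaHat (n + 1) j < 2 ^ (n + 1) := by
  induction n generalizing j with
  | zero => simpa [sigmaHat] using hj
  | succ n ih =>
    have hlow := ih (Nat.mod_lt j (by positivity : 0 < 2 ^ (n + 1)))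
    have htop : (if j % 2 = 0 then 1 - nu (n + 2) (j / 2) else nu (n + 2) (j / 2)) ≤ 1 := by
      have := nu_le_one (n + 2) (j / 2)
      split_ifs <;> omega
    rw [sigmaHat, pow_succ 2 (n + 1)]
    nlinarith

theorem bits_sigmaHat_succ {n j : ℕ} (hj : j < 2 ^ (n + 1)) {k : ℕ} (hk : k < n + 1) :
    bits (sigmaHat (n + 1) j) k = pascalAffine (bits j) k := by
  induction n generalizing j k with
  | zero =>
    obtain rfl : k = 0 := by omega
    simp [sigmaHat, pascalAffine, pascal, posIndicator, bits_zero]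
  | succ n ih =>
    have hmod := Nat.mod_lt j (by positivity : 0 < 2 ^ (n + 1))
    rw [sigmaHat, add_comm, bits_two_pow_mul_add _ (sigmaHat_succ_lt hmod)]
    by_cases hkn : k < n + 1
    · rw [if_pos hkn, ih hmod hkn]
      exact pascalAffine_congr fun l hl => bits_mod_two_pow (by omega)
    · rw [if_neg hkn, show k = n + 1 by omega, Nat.sub_self, bits_zero, cast_sigmaHat_topBit n hj]

/-- For every `n ≥ 1`, the map `σ̂ₙ` is an involution on
`Iₙ = {0, 1, …, 2ⁿ−1}`. -/
theorem sigmaHat_involutive (n : ℕ) (hn : 1 ≤ n) :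
    ∀ k < 2 ^ n, sigmaHat n (sigmaHat n k) = k := by
  obtain ⟨n, rfl⟩ := Nat.exists_eq_add_of_le' hn
  intro k hk
  have hσk := sigmaHat_succ_lt hk
  refine eq_of_bits_eq (sigmaHat_succ_lt hσk) hk fun i hi => ?_
  calc bits (sigmaHat (n + 1) (sigmaHat (n + 1) k)) i
      = pascalAffine (bits (sigmaHat (n + 1) k)) i := bits_sigmaHat_succ hσk hi
    _ = pascalAffine (pascalAffine (bits k)) i :=
        pascalAffine_congr fun l hl => bits_sigmaHat_succ hk (by omega)
    _ = bits k i := by rw [pascalAffine_involutive]
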